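/- arXiv:1010.5173 — 4 statements merged into one kernel-verified Lean document; each statement's English description precedes it below -/
import Mathlib

section
/- With c(n) as above, |c(n)| ≥ 2^{−2^n + n + 1} for all n ≥ 1; in particular |c(n)| ≥ 2^{−2^n} and c(n) ≠ 0. -/
/-!
Taking norms in the recursion gives `‖c n‖ (2^n - 1) = 2 ‖c (n-1)‖²`, hence
`2 ‖c (n-1)‖² ≤ 2^n ‖c n‖`. The sequence `2^(-2^n + n + 1)` starts at `1 = ‖c 0‖` and satisfies
this inequality with equality, so it stays below `‖c n‖` by induction.
-/

open Complex

theorem norm_two_pow_sub_one (m : ℕ) : ‖(2 : ℂ) ^ m - 1‖ = 2 ^ m - 1 := by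
  have hcast : (2 : ℂ) ^ m - 1 = ((2 ^ m - 1 : ℝ) : ℂ) := by push_cast; ring
  have hle : (1 : ℝ) ≤ 2 ^ m := one_le_pow₀ one_le_two
  rw [hcast, Complex.norm_real, Real.norm_of_nonneg (by linarith)]

theorem two_mul_norm_sq_le_of_eq_div {lam z w : ℂ} {n : ℕ} (hlam : ‖lam‖ = 1)
    (hw : w = -2 * I * lam * z ^ 2 / ((2 : ℂ) ^ (n + 1) - 1)) :
    2 * ‖z‖ ^ 2 ≤ 2 ^ (n + 1) * ‖w‖ := by
  have hden : (0 : ℝ) < 2 ^ (n + 1) - 1 := by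
    have := one_lt_pow₀ (one_lt_two : (1 : ℝ) < 2) n.add_one_ne_zero
    linarith
  have hnorm : ‖w‖ = 2 * ‖z‖ ^ 2 / (2 ^ (n + 1) - 1) := by
    rw [hw, norm_div, norm_two_pow_sub_one]
    simp [hlam]
  calc 2 * ‖z‖ ^ 2 = (2 ^ (n + 1) - 1) * ‖w‖ := by rw [hnorm]; field_simp
    _ ≤ 2 ^ (n + 1) * ‖w‖ := mul_le_mul_of_nonneg_right (by linarith) (norm_nonneg w)

theorem two_zpow_le_of_two_mul_sq_le {a : ℕ → ℝ} (h0 : 1 ≤ a 0)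
    (hstep : ∀ n, 2 * a n ^ 2 ≤ 2 ^ (n + 1) * a (n + 1)) (n : ℕ) :
    (2 : ℝ) ^ (-(2 : ℤ) ^ n + n + 1) ≤ a n := by
  induction n with
  | zero => simpa using h0
  | succ n ih =>
    have hb : (0 : ℝ) ≤ 2 ^ (-(2 : ℤ) ^ n + n + 1) := zpow_nonneg zero_le_two _
    have hdouble : (2 : ℝ) ^ (n + 1) * 2 ^ (-(2 : ℤ) ^ (n + 1) + ↑(n + 1) + 1) =
        2 * (2 ^ (-(2 : ℤ) ^ n + n + 1)) ^ 2 := by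
      rw [← zpow_natCast, ← zpow_natCast, ← zpow_mul, ← zpow_one_add₀ two_ne_zero,
        ← zpow_add₀ two_ne_zero]
      congr 1
      push_cast
      ring
    refine le_of_mul_le_mul_left ?_ (pow_pos two_pos (n + 1))
    calc (2 : ℝ) ^ (n + 1) * 2 ^ (-(2 : ℤ) ^ (n + 1) + ↑(n + 1) + 1)
        = 2 * (2 ^ (-(2 : ℤ) ^ n + n + 1)) ^ 2 := hdouble
      _ ≤ 2 * a n ^ 2 := by gcongr
      _ ≤ 2 ^ (n + 1) * a (n + 1) := hstep n

theorem stmt_3 (lam : ℂ) (hlam : lam = 1 ∨ lam = -1) (c : ℕ → ℂ)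
    (h0 : c 0 = 1)
    (hrec : ∀ n, 1 ≤ n → c n = -2 * I * lam * (c (n - 1)) ^ 2 / ((2 : ℂ) ^ n - 1)) :
    ∀ n : ℕ, 1 ≤ n →
      (2 : ℝ) ^ (-((2 : ℤ) ^ n) + (n : ℤ) + 1) ≤ ‖c n‖ ∧
      (2 : ℝ) ^ (-((2 : ℤ) ^ n)) ≤ ‖c n‖ ∧ c n ≠ 0 := by
  intro n _
  have hlam1 : ‖lam‖ = 1 := by rcases hlam with rfl | rfl <;> simp
  have hstep (k : ℕ) : 2 * ‖c k‖ ^ 2 ≤ 2 ^ (k + 1) * ‖c (k + 1)‖ :=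
    two_mul_norm_sq_le_of_eq_div hlam1 (by simpa using hrec (k + 1) le_add_self)
  have hbound := two_zpow_le_of_two_mul_sq_le (by simp [h0]) hstep n
  refine ⟨hbound, (zpow_le_zpow_right₀ one_le_two (by omega)).trans hbound, ?_⟩
  exact norm_ne_zero_iff.mp ((zpow_pos two_pos _).trans_le hbound).ne'
end

section
/- With S_n defined as in the iterative mode-generation process starting from S₀ = {(0,0), (±1,0), (0,±1)} ⊆ ℤ², we have ⋃_{n∈ℕ} S_n = ℤ². -/
/-- The squared Euclidean norm on `ℤ²`. -/
def nsq (j : ℤ × ℤ) : ℤ := j.1 ^ 2 + j.2 ^ 2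

/-- The sets of Fourier modes reachable after `n` steps of resonant interactions,
starting from the five modes of `1 + 2 cos x₁ + 2 cos x₂`. -/
def S : ℕ → Set (ℤ × ℤ)
  | 0 => {(0, 0), (1, 0), (-1, 0), (0, 1), (0, -1)}
  | n + 1 => S n ∪ {j | ∃ k ∈ S n, ∃ l ∈ S n, ∃ m ∈ S n,
      j = k - l + m ∧ nsq j = nsq k - nsq l + nsq m}

/-- A mode is reachable if it lies in some `S n`. -/
def M (p : ℤ × ℤ) : Prop := ∃ n, p ∈ S n

lemma S_mono : Monotone S := by
  apply monotone_nat_of_le_succ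
  intro n p hp
  exact Or.inl hp

lemma M_close {j k l m : ℤ × ℤ} (hk : M k) (hl : M l) (hm : M m)
    (hj : j = k - l + m) (hn : nsq j = nsq k - nsq l + nsq m) : M j := by
  obtain ⟨a, ha⟩ := hk
  obtain ⟨b, hb⟩ := hl
  obtain ⟨c, hc⟩ := hm
  refine ⟨max a (max b c) + 1, Or.inr ⟨k, ?_, l, ?_, m, ?_, hj, hn⟩⟩
  · exact S_mono (le_max_left _ _) ha
  · exact S_mono (le_trans (le_max_left _ _) (le_max_right _ _)) hb
  · exact S_mono (le_trans (le_max_right _ _) (le_max_right _ _)) hc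

lemma M_zero : M (0, 0) := ⟨0, Or.inl rfl⟩

lemma M_e1 : M (1, 0) := ⟨0, Or.inr (Or.inl rfl)⟩

lemma M_e3 : M (0, 1) := ⟨0, Or.inr (Or.inr (Or.inr (Or.inl rfl)))⟩

lemma M_e4 : M (0, -1) := ⟨0, Or.inr (Or.inr (Or.inr (Or.inr rfl)))⟩

/-- Axis-aligned rectangle completion through the origin. -/
lemma M_mix {a b : ℤ} (ha : M (a, 0)) (hb : M (0, b)) : M (a, b) := by
  refine M_close ha M_zero hb ?_ ?_
  · ext <;> simp
  · simp [nsq]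

lemma M_negX : ∀ p : ℤ × ℤ, M p → M (-p.1, p.2) := by
  have key : ∀ n, ∀ p : ℤ × ℤ, p ∈ S n → (-p.1, p.2) ∈ S n := by
    intro n
    induction n with
    | zero =>
      intro p hp
      rcases hp with h | h | h | h | h <;> subst h <;> simp [S]
    | succ n ih =>
      rintro p (hp | ⟨k, hk, l, hl, m, hm, hj, hn⟩)
      · exact Or.inl (ih p hp)
      · refine Or.inr ⟨(-k.1, k.2), ih k hk, (-l.1, l.2), ih l hl,
          (-m.1, m.2), ih m hm, ?_, ?_⟩
        · subst hj; ext <;> (simp; try ring)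
        · have h1 : nsq (-p.1, p.2) = nsq p := by simp [nsq]
          have h2 : nsq (-k.1, k.2) = nsq k := by simp [nsq]
          have h3 : nsq (-l.1, l.2) = nsq l := by simp [nsq]
          have h4 : nsq (-m.1, m.2) = nsq m := by simp [nsq]
          rw [h1, h2, h3, h4]; exact hn
  rintro p ⟨n, hn⟩
  exact ⟨n, key n p hn⟩

lemma M_swap : ∀ p : ℤ × ℤ, M p → M (p.2, p.1) := by
  have key : ∀ n, ∀ p : ℤ × ℤ, p ∈ S n → (p.2, p.1) ∈ S n := by
    intro n
    induction n with
    | zero =>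
      intro p hp
      rcases hp with h | h | h | h | h <;> subst h <;> simp [S]
    | succ n ih =>
      rintro p (hp | ⟨k, hk, l, hl, m, hm, hj, hn⟩)
      · exact Or.inl (ih p hp)
      · refine Or.inr ⟨(k.2, k.1), ih k hk, (l.2, l.1), ih l hl,
          (m.2, m.1), ih m hm, ?_, ?_⟩
        · subst hj; ext <;> simp [Prod.fst_sub, Prod.snd_sub]
        · have h1 : ∀ q : ℤ × ℤ, nsq (q.2, q.1) = nsq q := by
            intro q; simp [nsq]; ring
          rw [h1, h1, h1, h1]; exact hn
  rintro p ⟨n, hn⟩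
  exact ⟨n, key n p hn⟩

/-- All nonnegative points on the x-axis are reachable. -/
lemma M_axisX_nat : ∀ n : ℕ, M ((n : ℤ), 0) ∧ M ((n : ℤ) + 1, 0) := by
  intro n
  induction n with
  | zero => exact ⟨M_zero, by exact_mod_cast M_e1⟩
  | succ n ih =>
    obtain ⟨h1, h2⟩ := ih
    refine ⟨by exact_mod_cast h2, ?_⟩
    -- build (n+1, 1) and (n+1, -1), then complete the tilted rectangle
    have hk : M ((n : ℤ) + 1, 1) := M_mix h2 M_e3
    have hm : M ((n : ℤ) + 1, -1) := M_mix h2 M_e4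
    have : M ((n : ℤ) + 2, 0) := by
      refine M_close hk h1 hm ?_ ?_
      · ext <;> simp <;> ring
      · simp [nsq]; ring
    have h : ((n : ℤ) + 1 : ℤ) + 1 = (n : ℤ) + 2 := by ring
    rw [show (((n + 1 : ℕ) : ℤ) + 1) = (n : ℤ) + 2 by push_cast; ring]
    exact this

lemma M_axisX : ∀ a : ℤ, M (a, 0) := by
  intro a
  rcases le_or_gt 0 a with h | h
  · obtain ⟨n, rfl⟩ := Int.eq_ofNat_of_zero_le h
    exact (M_axisX_nat n).1
  · obtain ⟨n, rfl⟩ := Int.eq_negSucc_of_lt_zero h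
    have h := M_negX _ (M_axisX_nat (n + 1)).1
    have e : (Int.negSucc n) = -(((n + 1 : ℕ) : ℤ)) := by
      rw [Int.negSucc_eq]; push_cast; ring
    rw [e]
    exact h

lemma M_all : ∀ p : ℤ × ℤ, M p := by
  intro ⟨a, b⟩
  have hb : M (0, b) := by
    have := M_swap _ (M_axisX b)
    simpa using this
  exact M_mix (M_axisX a) hb

theorem stmt_7 : ⋃ n, S n = Set.univ := by
  rw [Set.eq_univ_iff_forall]
  intro p
  obtain ⟨n, hn⟩ := M_all p
  exact Set.mem_iUnion.mpr ⟨n, hn⟩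
end

section
/- Let p ≥ 1 and let j = (2^p, 0) ∈ ℤ². If k, ℓ, m lie in S_{2p−1} = {(j₁,j₂) : max(|j₁|,|j₂|) ≤ 2^{p−1}} with j = k − ℓ + m and |j|² = |k|² − |ℓ|² + |m|², then ℓ = (0,0) and {k, m} = {(2^{p−1}, 2^{p−1}), (2^{p−1}, −2^{p−1})}. -/
theorem stmt_8 (p : ℕ) (hp : 1 ≤ p) (k l m : ℤ × ℤ)
    (hk : max |k.1| |k.2| ≤ 2 ^ (p - 1)) (hl : max |l.1| |l.2| ≤ 2 ^ (p - 1))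
    (hm : max |m.1| |m.2| ≤ 2 ^ (p - 1))
    (hsum : ((2 : ℤ) ^ p, (0 : ℤ)) = k - l + m)
    (hres : nsq ((2 : ℤ) ^ p, (0 : ℤ)) = nsq k - nsq l + nsq m) :
    l = (0, 0) ∧
      ((k = ((2 : ℤ) ^ (p - 1), (2 : ℤ) ^ (p - 1)) ∧
          m = ((2 : ℤ) ^ (p - 1), -(2 : ℤ) ^ (p - 1))) ∨
        (k = ((2 : ℤ) ^ (p - 1), -(2 : ℤ) ^ (p - 1)) ∧
          m = ((2 : ℤ) ^ (p - 1), (2 : ℤ) ^ (p - 1)))) := by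
  set N : ℤ := 2 ^ (p - 1) with hN
  have hNpos : 0 < N := by positivity
  have h2p : (2 : ℤ) ^ p = 2 * N := by
    rw [hN, ← pow_succ']
    congr 1
    omega
  clear_value N
  obtain ⟨hk1, hk2⟩ := max_le_iff.mp hk
  obtain ⟨hl1, hl2⟩ := max_le_iff.mp hl
  obtain ⟨hm1, hm2⟩ := max_le_iff.mp hm
  rw [abs_le] at hk1 hk2 hl1 hl2 hm1 hm2
  have hs1 : 2 * N = k.1 - l.1 + m.1 := by
    have := congrArg Prod.fst hsum
    simpa [h2p] using this
  have hs2 : (0 : ℤ) = k.2 - l.2 + m.2 := by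
    have := congrArg Prod.snd hsum
    simpa using this
  have hr : 4 * N ^ 2 = k.1 ^ 2 + k.2 ^ 2 - (l.1 ^ 2 + l.2 ^ 2) + (m.1 ^ 2 + m.2 ^ 2) := by
    have := hres
    simp only [nsq, h2p] at this
    ring_nf at this ⊢
    linarith
  have sqk1 : k.1 ^ 2 ≤ N ^ 2 := sq_le_sq' hk1.1 hk1.2
  have sqk2 : k.2 ^ 2 ≤ N ^ 2 := sq_le_sq' hk2.1 hk2.2
  have sqm1 : m.1 ^ 2 ≤ N ^ 2 := sq_le_sq' hm1.1 hm1.2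
  have sqm2 : m.2 ^ 2 ≤ N ^ 2 := sq_le_sq' hm2.1 hm2.2
  have hL : l.1 ^ 2 + l.2 ^ 2 ≤ 0 := by linarith
  have hl1z : l.1 = 0 := by
    have h1 : l.1 ^ 2 = 0 := le_antisymm (by nlinarith [sq_nonneg l.2]) (sq_nonneg l.1)
    exact pow_eq_zero_iff (by norm_num) |>.mp h1
  have hl2z : l.2 = 0 := by
    have h1 : l.2 ^ 2 = 0 := le_antisymm (by nlinarith [sq_nonneg l.1]) (sq_nonneg l.2)
    exact pow_eq_zero_iff (by norm_num) |>.mp h1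
  simp only [hl1z, hl2z] at hr hs1 hs2
  have hk1e : k.1 ^ 2 = N ^ 2 := by linarith
  have hk2e : k.2 ^ 2 = N ^ 2 := by linarith
  have hk1N : k.1 = N := by linarith
  have hm1N : m.1 = N := by linarith
  have hm2e : m.2 = -k.2 := by linarith
  have hk2cases : k.2 = N ∨ k.2 = -N := by
    have h0 : (k.2 - N) * (k.2 + N) = 0 := by linear_combination hk2e
    rcases mul_eq_zero.mp h0 with h | h
    · left; linarith
    · right; linarith
  refine ⟨Prod.ext hl1z hl2z, ?_⟩
  rcases hk2cases with h | h
  · left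
    exact ⟨Prod.ext hk1N h, Prod.ext hm1N (by rw [hm2e, h])⟩
  · right
    exact ⟨Prod.ext hk1N h, Prod.ext hm1N (by rw [hm2e, h]; ring)⟩
end

section
/- Let p ≥ 0 and j = (2^p, 2^p) ∈ ℤ². If k, ℓ, m ∈ S_{2p} = {(j₁,j₂) ∈ ℤ² : |j₁| + |j₂| ≤ 2^p} satisfy j = k − ℓ + m and |j|² = |k|² − |ℓ|² + |m|², then ℓ = (0,0) and {k, m} = {(2^p, 0), (0, 2^p)}. -/
theorem stmt_9 (p : ℕ) (k l m : ℤ × ℤ)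
    (hk : |k.1| + |k.2| ≤ 2 ^ p) (hl : |l.1| + |l.2| ≤ 2 ^ p)
    (hm : |m.1| + |m.2| ≤ 2 ^ p)
    (hsum : ((2 : ℤ) ^ p, (2 : ℤ) ^ p) = k - l + m)
    (hres : nsq ((2 : ℤ) ^ p, (2 : ℤ) ^ p) = nsq k - nsq l + nsq m) :
    l = (0, 0) ∧
      ((k = ((2 : ℤ) ^ p, (0 : ℤ)) ∧ m = ((0 : ℤ), (2 : ℤ) ^ p)) ∨
        (k = ((0 : ℤ), (2 : ℤ) ^ p) ∧ m = ((2 : ℤ) ^ p, (0 : ℤ)))) := by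
  set N : ℤ := 2 ^ p with hN
  have hN0 : 0 < N := by positivity
  have h1 : N = k.1 - l.1 + m.1 := congrArg Prod.fst hsum
  have h2 : N = k.2 - l.2 + m.2 := congrArg Prod.snd hsum
  simp only [nsq] at hres
  have key2 : 2 * ((N - k.1) * (N - m.1) + (N - k.2) * (N - m.2)) = 0 := by
    linear_combination hres - (l.1 + k.1 + m.1 - N) * h1 - (l.2 + k.2 + m.2 - N) * h2
  have key : (N - k.1) * (N - m.1) + (N - k.2) * (N - m.2) = 0 := by linarith
  have a1 : 0 ≤ N - k.1 := by have := le_abs_self k.1; have := abs_nonneg k.2; linarith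
  have b1 : 0 ≤ N - m.1 := by have := le_abs_self m.1; have := abs_nonneg m.2; linarith
  have a2 : 0 ≤ N - k.2 := by have := le_abs_self k.2; have := abs_nonneg k.1; linarith
  have b2 : 0 ≤ N - m.2 := by have := le_abs_self m.2; have := abs_nonneg m.1; linarith
  have p1 : (N - k.1) * (N - m.1) = 0 := by nlinarith [mul_nonneg a1 b1, mul_nonneg a2 b2]
  have p2 : (N - k.2) * (N - m.2) = 0 := by nlinarith [mul_nonneg a1 b1, mul_nonneg a2 b2]
  have hcase : (k.1 = N ∧ k.2 = 0 ∧ m.1 = 0 ∧ m.2 = N) ∨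
      (k.1 = 0 ∧ k.2 = N ∧ m.1 = N ∧ m.2 = 0) := by
    rcases mul_eq_zero.mp p1 with h | h
    · have hk1e : k.1 = N := by linarith
      have hk2e : k.2 = 0 := by
        have h' : |k.1| = N := by rw [hk1e]; exact abs_of_nonneg hN0.le
        have : |k.2| ≤ 0 := by linarith
        exact abs_nonpos_iff.mp (by linarith [abs_nonneg k.2])
      have hm2e : m.2 = N := by
        rcases mul_eq_zero.mp p2 with h' | h'
        · exfalso; rw [hk2e] at h'; simp at h'; omega
        · linarith
      have hm1e : m.1 = 0 := by
        have h' : |m.2| = N := by rw [hm2e]; exact abs_of_nonneg hN0.le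
        exact abs_nonpos_iff.mp (by linarith [abs_nonneg m.1])
      exact Or.inl ⟨hk1e, hk2e, hm1e, hm2e⟩
    · have hm1e : m.1 = N := by linarith
      have hm2e : m.2 = 0 := by
        have h' : |m.1| = N := by rw [hm1e]; exact abs_of_nonneg hN0.le
        exact abs_nonpos_iff.mp (by linarith [abs_nonneg m.2])
      have hk2e : k.2 = N := by
        rcases mul_eq_zero.mp p2 with h' | h'
        · linarith
        · exfalso; rw [hm2e] at h'; simp at h'; omega
      have hk1e : k.1 = 0 := by
        have h' : |k.2| = N := by rw [hk2e]; exact abs_of_nonneg hN0.le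
        exact abs_nonpos_iff.mp (by linarith [abs_nonneg k.1])
      exact Or.inr ⟨hk1e, hk2e, hm1e, hm2e⟩
  rcases hcase with ⟨e1, e2, e3, e4⟩ | ⟨e1, e2, e3, e4⟩
  · exact ⟨Prod.ext (by dsimp; linarith) (by dsimp; linarith),
      Or.inl ⟨Prod.ext e1 e2, Prod.ext e3 e4⟩⟩
  · exact ⟨Prod.ext (by dsimp; linarith) (by dsimp; linarith),
      Or.inr ⟨Prod.ext e1 e2, Prod.ext e3 e4⟩⟩
end
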